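/- Let 0 < Y < 2 and λ > 0. Then ∫_0^∞ x^{Y/2 − 1} (1+x)^{−(Y+1)/2} e^{−λx} dx = 2^{Y} λ^{Y/2} (Γ(Y/2)/Γ(Y)) · ∫_0^∞ t^{Y−1} e^{−2λt − λt²} dt. (The Laplace transform ∫_0^∞ x^{Y/2−1}(1+x)^{−Y/2−1/2}e^{−λx}dx expressed through the Hermite-function integral I(Y, 2λ, λ) = ∫_0^∞ t^{Y−1}e^{−2λt−λt²}dt.) -/

import Mathlib

/-!
Writing `Γ(q) λ^{-q} (1 + x)^{-q} = ∫_0^∞ σ^{q-1} e^{-λ(1+x)σ} dσ` with `q = (Y+1)/2` turns the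
left-hand side into a double integral with exponent `-λ(x + σ + xσ)`. Substituting `x = a²`,
`σ = b²` and symmetrizing in `(a, b)` gives the weight `(a + b)(ab)^{Y-1}` against
`e^{-λ((a-b)² + 2ab + (ab)²)}`; the change of variables `u = a - b`, `t = ab`, whose Jacobian is
`a + b`, then splits it into a Gaussian integral in `u` times the Hermite integral in `t`.
Legendre's duplication formula converts the resulting constant `2√(π/λ) λ^q / Γ(q)`.
-/

open MeasureTheory Real Set Function
open scoped ENNReal

theorem image_mul_add_Ioi_max (u : ℝ) :
    (fun b : ℝ => b * (b + u)) '' Ioi (max 0 (-u)) = Ioi 0 := by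
  ext t
  simp only [mem_image, mem_Ioi, max_lt_iff]
  constructor
  · rintro ⟨b, ⟨hb, hbu⟩, rfl⟩
    exact mul_pos hb (by linarith)
  · intro ht
    have hd : 0 ≤ u ^ 2 + 4 * t := by positivity
    have hr := sq_sqrt hd
    have hu : |u| < √(u ^ 2 + 4 * t) := by
      rw [← sqrt_sq_eq_abs]; exact sqrt_lt_sqrt (sq_nonneg u) (by linarith)
    refine ⟨(√(u ^ 2 + 4 * t) - u) / 2, ⟨?_, ?_⟩, by linear_combination hr / 4⟩ <;>
      linarith [le_abs_self u, neg_abs_le u]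

theorem lintegral_Ioi_eq_lintegral_comp_mul_add (u : ℝ) (g : ℝ → ℝ≥0∞) :
    ∫⁻ t in Ioi 0, g t =
      ∫⁻ b in Ioi (max 0 (-u)), ENNReal.ofReal (2 * b + u) * g (b * (b + u)) := by
  rw [← image_mul_add_Ioi_max u]
  refine lintegral_image_eq_lintegral_deriv_mul_of_monotoneOn measurableSet_Ioi
    (fun b _ => ?_) (fun b hb c hc hbc => ?_) g
  · exact (((hasDerivAt_id' b).fun_mul ((hasDerivAt_id' b).add_const u)).congr_deriv
      (by ring)).hasDerivWithinAt
  · simp only [mem_Ioi, max_lt_iff] at hb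
    nlinarith

theorem lintegral_Ioi_eq_lintegral_comp_sq (g : ℝ → ℝ≥0∞) :
    ∫⁻ x in Ioi 0, g x = ∫⁻ a in Ioi 0, ENNReal.ofReal (2 * a) * g (a ^ 2) := by
  simpa [sq] using lintegral_Ioi_eq_lintegral_comp_mul_add 0 g

theorem lintegral_rpow_mul_exp_neg_mul_Ioi {p c : ℝ} (hp : 0 < p) (hc : 0 < c) :
    ∫⁻ t in Ioi 0, ENNReal.ofReal (t ^ (p - 1) * exp (-(c * t))) =
      ENNReal.ofReal ((1 / c) ^ p * Gamma p) := by
  have hint : IntegrableOn (fun t : ℝ => t ^ (p - 1) * exp (-(c * t))) (Ioi 0) := by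
    simpa using integrableOn_rpow_mul_exp_neg_mul_rpow (by linarith : -1 < p - 1) one_pos hc
  rw [← integral_rpow_mul_exp_neg_mul_Ioi hp hc, ofReal_integral_eq_lintegral_ofReal hint]
  filter_upwards [ae_restrict_mem measurableSet_Ioi] with t ht
  exact mul_nonneg (rpow_nonneg (le_of_lt ht) _) (exp_pos _).le

theorem lintegral_Ioi_lintegral_Ioi_eq_lintegral_shear {F : ℝ → ℝ → ℝ≥0∞}
    (hF : Measurable (uncurry F)) :
    ∫⁻ a in Ioi 0, ∫⁻ b in Ioi 0, F a b = ∫⁻ u, ∫⁻ b in Ioi (max 0 (-u)), F (u + b) b := by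
  set G : ℝ → ℝ → ℝ≥0∞ := fun a b => (Ioi 0).indicator (F · b) a
  have hG : Measurable (fun p : ℝ × ℝ => G (p.2 + p.1) p.1) :=
    (hF.indicator (measurableSet_Ioi.preimage measurable_fst)).comp
      (by fun_prop : Measurable fun p : ℝ × ℝ => (p.2 + p.1, p.1))
  calc ∫⁻ a in Ioi 0, ∫⁻ b in Ioi 0, F a b
      = ∫⁻ b in Ioi 0, ∫⁻ a, G a b := by
        rw [lintegral_lintegral_swap hF.aemeasurable]
        refine setLIntegral_congr_fun measurableSet_Ioi fun b _ => ?_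
        exact (lintegral_indicator measurableSet_Ioi _).symm
    _ = ∫⁻ b in Ioi 0, ∫⁻ u, G (u + b) b := by
        refine setLIntegral_congr_fun measurableSet_Ioi fun b _ => ?_
        exact (lintegral_add_right_eq_self (G · b) b).symm
    _ = ∫⁻ u, ∫⁻ b in Ioi 0, G (u + b) b := lintegral_lintegral_swap hG.aemeasurable
    _ = ∫⁻ u, ∫⁻ b in Ioi (max 0 (-u)), F (u + b) b := by
        refine lintegral_congr fun u => ?_
        have hGu : ∀ b, G (u + b) b = (Ioi (-u)).indicator (fun b => F (u + b) b) b := by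
          intro b
          simp only [G, indicator, mem_Ioi, neg_lt_iff_pos_add, add_comm b]
        simp_rw [hGu]
        rw [lintegral_indicator measurableSet_Ioi, Measure.restrict_restrict measurableSet_Ioi,
          Ioi_inter_Ioi, sup_comm]

theorem lintegral_lintegral_two_mul_mul_eq_add_mul {α : Type*} [MeasurableSpace α]
    {μ : Measure α} [SFinite μ] {φ : α → ℝ≥0∞} {h : α → α → ℝ≥0∞} (hφ : Measurable φ)
    (hh : Measurable (uncurry h)) (hsymm : ∀ a b, h a b = h b a) :
    ∫⁻ a, ∫⁻ b, 2 * φ b * h a b ∂μ ∂μ = ∫⁻ a, ∫⁻ b, (φ a + φ b) * h a b ∂μ ∂μ := by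
  have hφh : Measurable (uncurry fun a b => φ a * h a b) := (hφ.comp measurable_fst).mul hh
  have hswap : ∫⁻ a, ∫⁻ b, φ a * h a b ∂μ ∂μ = ∫⁻ a, ∫⁻ b, φ b * h a b ∂μ ∂μ := by
    rw [lintegral_lintegral_swap hφh.aemeasurable]
    simp_rw [hsymm]
  have hsplit : ∫⁻ a, ∫⁻ b, (φ a + φ b) * h a b ∂μ ∂μ =
      ∫⁻ a, ∫⁻ b, φ a * h a b ∂μ ∂μ + ∫⁻ a, ∫⁻ b, φ b * h a b ∂μ ∂μ := by
    simp_rw [add_mul]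
    rw [← lintegral_add_left (f := fun a => ∫⁻ b, φ a * h a b ∂μ) hφh.lintegral_prod_right']
    exact lintegral_congr fun a => lintegral_add_left hφh.of_uncurry_left _
  rw [hsplit, hswap, ← two_mul, ← lintegral_const_mul' _ _ ENNReal.ofNat_ne_top]
  simp_rw [← lintegral_const_mul' _ _ ENNReal.ofNat_ne_top, mul_assoc]

noncomputable def laplaceHermiteKernel (Y l a b : ℝ) : ℝ≥0∞ :=
  ENNReal.ofReal (2 * (a * b) ^ (Y - 1) * exp (-(l * (a ^ 2 + b ^ 2 + (a * b) ^ 2))))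

section

variable {Y l : ℝ}

theorem measurable_laplaceHermiteKernel : Measurable (uncurry (laplaceHermiteKernel Y l)) := by
  unfold laplaceHermiteKernel; fun_prop

theorem laplaceHermiteKernel_comm (a b : ℝ) :
    laplaceHermiteKernel Y l a b = laplaceHermiteKernel Y l b a := by
  simp only [laplaceHermiteKernel, mul_comm a b, add_comm (a ^ 2)]

theorem laplaceHermiteKernel_add_left (u b : ℝ) :
    laplaceHermiteKernel Y l (u + b) b = ENNReal.ofReal (2 * exp (-l * u ^ 2)) *
      ENNReal.ofReal
        ((b * (b + u)) ^ (Y - 1) * exp (-(2 * l * (b * (b + u))) - l * (b * (b + u)) ^ 2)) := by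
  rw [laplaceHermiteKernel, ← ENNReal.ofReal_mul (by positivity)]
  congr 1
  rw [show (u + b) * b = b * (b + u) by ring,
    show -(l * ((u + b) ^ 2 + b ^ 2 + (b * (b + u)) ^ 2)) =
      -l * u ^ 2 + (-(2 * l * (b * (b + u))) - l * (b * (b + u)) ^ 2) by ring, exp_add]
  ring

theorem two_mul_sq_rpow_mul_two_mul_sq_rpow {a b : ℝ} (ha : 0 < a) (hb : 0 < b) :
    2 * a * (a ^ 2) ^ (Y / 2 - 1) * (2 * b * (b ^ 2) ^ ((Y + 1) / 2 - 1)) =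
      2 * b * (2 * (a * b) ^ (Y - 1)) := by
  have hsq : ∀ {c : ℝ}, 0 < c → ∀ s : ℝ, (c ^ 2) ^ s = c ^ (2 * s) := fun hc s => by
    rw [← rpow_natCast, ← rpow_mul hc.le, Nat.cast_ofNat]
  rw [hsq ha, hsq hb, mul_rpow ha.le hb.le, show 2 * ((Y + 1) / 2 - 1) = Y - 1 by ring,
    show Y - 1 = 2 * (Y / 2 - 1) + 1 by ring, rpow_add_one ha.ne']
  ring

theorem ofReal_Gamma_mul_lintegral_laplace_eq_lintegral_kernel (hY : 0 < Y) (hl : 0 < l) :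
    ENNReal.ofReal (Gamma ((Y + 1) / 2) * (1 / l) ^ ((Y + 1) / 2)) *
        ∫⁻ x in Ioi 0,
          ENNReal.ofReal (x ^ (Y / 2 - 1) * (1 + x) ^ (-((Y + 1) / 2)) * exp (-(l * x)))
      = ∫⁻ a in Ioi 0, ∫⁻ b in Ioi 0, 2 * ENNReal.ofReal b * laplaceHermiteKernel Y l a b := by
  have hq : 0 < (Y + 1) / 2 := by positivity
  calc _ = ∫⁻ x in Ioi 0, ∫⁻ σ in Ioi 0, ENNReal.ofReal (x ^ (Y / 2 - 1) * exp (-(l * x))) *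
          ENNReal.ofReal (σ ^ ((Y + 1) / 2 - 1) * exp (-(l * (1 + x) * σ))) := by
        rw [← lintegral_const_mul' _ _ ENNReal.ofReal_ne_top]
        refine setLIntegral_congr_fun measurableSet_Ioi fun x (hx : 0 < x) => ?_
        have h1x : 0 < 1 + x := by linarith
        rw [lintegral_const_mul' _ _ ENNReal.ofReal_ne_top,
          lintegral_rpow_mul_exp_neg_mul_Ioi hq (by positivity),
          ← ENNReal.ofReal_mul (by positivity), ← ENNReal.ofReal_mul (by positivity)]
        congr 1
        rw [one_div (l * (1 + x)), mul_inv, mul_rpow (by positivity) (by positivity), ← one_div,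
          inv_rpow h1x.le, ← rpow_neg h1x.le]
        ring
    _ = _ := by
        rw [lintegral_Ioi_eq_lintegral_comp_sq]
        refine setLIntegral_congr_fun measurableSet_Ioi fun a (ha : 0 < a) => ?_
        rw [lintegral_Ioi_eq_lintegral_comp_sq, ← lintegral_const_mul' _ _ ENNReal.ofReal_ne_top]
        refine setLIntegral_congr_fun measurableSet_Ioi fun b (hb : 0 < b) => ?_
        rw [laplaceHermiteKernel, ← ENNReal.ofReal_ofNat 2, ← ENNReal.ofReal_mul zero_le_two,
          ← ENNReal.ofReal_mul (by positivity), ← ENNReal.ofReal_mul (by positivity),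
          ← ENNReal.ofReal_mul (by positivity), ← ENNReal.ofReal_mul (by positivity)]
        congr 1
        have hexp : exp (-(l * (a ^ 2 + b ^ 2 + (a * b) ^ 2))) =
            exp (-(l * a ^ 2)) * exp (-(l * (1 + a ^ 2) * b ^ 2)) := by
          rw [← exp_add]; ring_nf
        rw [hexp]
        linear_combination (exp (-(l * a ^ 2)) * exp (-(l * (1 + a ^ 2) * b ^ 2))) *
          two_mul_sq_rpow_mul_two_mul_sq_rpow (Y := Y) ha hb

theorem lintegral_add_mul_laplaceHermiteKernel_eq (hl : 0 < l) :
    ∫⁻ a in Ioi 0, ∫⁻ b in Ioi 0, ENNReal.ofReal (a + b) * laplaceHermiteKernel Y l a b =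
      ENNReal.ofReal (2 * √(π / l)) *
        ∫⁻ t in Ioi 0, ENNReal.ofReal (t ^ (Y - 1) * exp (-(2 * l * t) - l * t ^ 2)) := by
  have hF : Measurable (uncurry fun a b => ENNReal.ofReal (a + b) * laplaceHermiteKernel Y l a b) :=
    (measurable_fst.add measurable_snd).ennreal_ofReal.mul measurable_laplaceHermiteKernel
  have hgauss : ∫⁻ u, ENNReal.ofReal (2 * exp (-l * u ^ 2)) = ENNReal.ofReal (2 * √(π / l)) := by
    rw [← ofReal_integral_eq_lintegral_ofReal ((integrable_exp_neg_mul_sq hl).const_mul 2)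
      (ae_of_all _ fun u => by positivity), integral_const_mul, integral_gaussian]
  calc ∫⁻ a in Ioi 0, ∫⁻ b in Ioi 0, ENNReal.ofReal (a + b) * laplaceHermiteKernel Y l a b
      = ∫⁻ u, ∫⁻ b in Ioi (max 0 (-u)), ENNReal.ofReal (2 * b + u) *
          laplaceHermiteKernel Y l (u + b) b := by
        rw [lintegral_Ioi_lintegral_Ioi_eq_lintegral_shear hF]
        simp only [show ∀ u b : ℝ, u + b + b = 2 * b + u by intros; ring]
    _ = ∫⁻ u, ENNReal.ofReal (2 * exp (-l * u ^ 2)) *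
          ∫⁻ t in Ioi 0, ENNReal.ofReal (t ^ (Y - 1) * exp (-(2 * l * t) - l * t ^ 2)) := by
        refine lintegral_congr fun u => ?_
        rw [lintegral_Ioi_eq_lintegral_comp_mul_add u,
          ← lintegral_const_mul' _ _ ENNReal.ofReal_ne_top]
        refine setLIntegral_congr_fun measurableSet_Ioi fun b _ => ?_
        rw [laplaceHermiteKernel_add_left]
        ring
    _ = _ := by rw [lintegral_mul_const _ (by fun_prop), hgauss]

theorem ofReal_Gamma_mul_lintegral_laplace_eq_lintegral_hermite (hY : 0 < Y) (hl : 0 < l) :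
    ENNReal.ofReal (Gamma ((Y + 1) / 2) * (1 / l) ^ ((Y + 1) / 2)) *
        ∫⁻ x in Ioi 0,
          ENNReal.ofReal (x ^ (Y / 2 - 1) * (1 + x) ^ (-((Y + 1) / 2)) * exp (-(l * x)))
      = ENNReal.ofReal (2 * √(π / l)) *
        ∫⁻ t in Ioi 0, ENNReal.ofReal (t ^ (Y - 1) * exp (-(2 * l * t) - l * t ^ 2)) := by
  rw [ofReal_Gamma_mul_lintegral_laplace_eq_lintegral_kernel hY hl,
    lintegral_lintegral_two_mul_mul_eq_add_mul ENNReal.measurable_ofReal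
      measurable_laplaceHermiteKernel laplaceHermiteKernel_comm,
    ← lintegral_add_mul_laplaceHermiteKernel_eq hl]
  refine setLIntegral_congr_fun measurableSet_Ioi fun a (ha : 0 < a) => ?_
  refine setLIntegral_congr_fun measurableSet_Ioi fun b (hb : 0 < b) => ?_
  rw [ENNReal.ofReal_add ha.le hb.le]

theorem Gamma_mul_rpow_mul_integral_laplace_eq_integral_hermite (hY : 0 < Y) (hl : 0 < l) :
    Gamma ((Y + 1) / 2) * (1 / l) ^ ((Y + 1) / 2) *
        ∫ x in Ioi 0, x ^ (Y / 2 - 1) * (1 + x) ^ (-((Y + 1) / 2)) * exp (-(l * x))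
      = 2 * √(π / l) * ∫ t in Ioi 0, t ^ (Y - 1) * exp (-(2 * l * t) - l * t ^ 2) := by
  have hf : 0 ≤ᵐ[volume.restrict (Ioi 0)]
      fun x : ℝ => x ^ (Y / 2 - 1) * (1 + x) ^ (-((Y + 1) / 2)) * exp (-(l * x)) := by
    filter_upwards [ae_restrict_mem measurableSet_Ioi] with x (hx : 0 < x)
    have : 0 < 1 + x := by linarith
    positivity
  have hI : 0 ≤ᵐ[volume.restrict (Ioi 0)]
      fun t : ℝ => t ^ (Y - 1) * exp (-(2 * l * t) - l * t ^ 2) := by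
    filter_upwards [ae_restrict_mem measurableSet_Ioi] with t (ht : 0 < t)
    positivity
  have h := congrArg ENNReal.toReal (ofReal_Gamma_mul_lintegral_laplace_eq_lintegral_hermite hY hl)
  rwa [ENNReal.toReal_mul, ENNReal.toReal_mul, ENNReal.toReal_ofReal (by positivity),
    ENNReal.toReal_ofReal (by positivity), ← integral_eq_lintegral_of_nonneg_ae hf (by fun_prop),
    ← integral_eq_lintegral_of_nonneg_ae hI (by fun_prop)] at h

theorem two_mul_sqrt_pi_div_div_Gamma_mul_rpow (hY : 0 < Y) (hl : 0 < l) :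
    2 * √(π / l) / (Gamma ((Y + 1) / 2) * (1 / l) ^ ((Y + 1) / 2)) =
      2 ^ Y * l ^ (Y / 2) * (Gamma (Y / 2) / Gamma Y) := by
  have hdup := Gamma_mul_Gamma_add_half (Y / 2)
  rw [show Y / 2 + 1 / 2 = (Y + 1) / 2 by ring, show 2 * (Y / 2) = Y by ring,
    rpow_sub two_pos, rpow_one] at hdup
  have hlq : (1 / l) ^ ((Y + 1) / 2) = 1 / (l ^ (Y / 2) * √l) := by
    rw [div_rpow zero_le_one hl.le, one_rpow, sqrt_eq_rpow, ← rpow_add hl]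
    ring_nf
  rw [hlq, sqrt_div' _ hl.le]
  field_simp at hdup ⊢
  linear_combination -hdup

end

theorem laplace_transform_via_hermite (Y l : ℝ) (hY0 : 0 < Y) (hl : 0 < l) :
    ∫ x in Ioi (0:ℝ), x ^ (Y/2 - 1) * (1 + x) ^ (-((Y+1)/2)) * Real.exp (-(l * x)) =
      2 ^ Y * l ^ (Y/2) * (Real.Gamma (Y/2) / Real.Gamma Y) *
        ∫ t in Ioi (0:ℝ), t ^ (Y - 1) * Real.exp (-(2 * l * t) - l * t^2) := by
  have hC : Gamma ((Y + 1) / 2) * (1 / l) ^ ((Y + 1) / 2) ≠ 0 := by positivity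
  rw [← two_mul_sqrt_pi_div_div_Gamma_mul_rpow hY0 hl, div_mul_eq_mul_div, eq_div_iff hC, mul_comm]
  exact Gamma_mul_rpow_mul_integral_laplace_eq_integral_hermite hY0 hl
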